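/- Let N ∈ {3,4}, let U_n be the truncated Aubin–Talenti bubbles, and set K'_N := ∫_{ℝ^N} U(x)^{2*} dx, where U(x) := A_N (1+|x|²)^{−(N−2)/2} is the full Aubin–Talenti bubble. Then there exists C > 0 such that for all integers n ≥ 1, |∫_{ℝ^N} U_n(x)^{2*} dx − K'_N| ≤ C · n^{−N}. -/

import Mathlib

open Real MeasureTheory

/-- The critical Sobolev exponent `2* = 2N/(N-2)`. -/
noncomputable def twoStar (N : ℕ) : ℝ := 2 * (N : ℝ) / ((N : ℝ) - 2)

/-- The radial profile of the truncated Aubin–Talenti bubble. -/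
noncomputable def bubbleProfile (N n : ℕ) (r : ℝ) : ℝ :=
  if r < 1 then
    ((N : ℝ) * ((N : ℝ) - 2)) ^ (((N : ℝ) - 2) / 4)
      * ((n : ℝ) / (1 + (n : ℝ) ^ 2 * r ^ 2)) ^ (((N : ℝ) - 2) / 2)
  else if r < 2 then
    ((N : ℝ) * ((N : ℝ) - 2)) ^ (((N : ℝ) - 2) / 4)
      * ((n : ℝ) / (1 + (n : ℝ) ^ 2)) ^ (((N : ℝ) - 2) / 2) * (2 - r)
  else 0

/-- The truncated Aubin–Talenti bubble `U_n` on `ℝ^N`. -/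
noncomputable def Ubub (N n : ℕ) (x : EuclideanSpace ℝ (Fin N)) : ℝ :=
  bubbleProfile N n ‖x‖

/-- The full Aubin–Talenti bubble `U(x) = A_N (1+|x|²)^{-(N-2)/2}` on `ℝ^N`. -/
noncomputable def Ufull (N : ℕ) (x : EuclideanSpace ℝ (Fin N)) : ℝ :=
  ((N : ℝ) * ((N : ℝ) - 2)) ^ (((N : ℝ) - 2) / 4)
    * (1 + ‖x‖ ^ 2) ^ (-(((N : ℝ) - 2) / 2))

/-!
On the unit ball `U_n(x)^{2*} = n^N U(n x)^{2*}`, and `∫ n^N U(n x)^{2*} dx = K'_N` by scaling, so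
the difference of the two integrals is the integral over `|x| ≥ 1` of `U_n^{2*} - n^N U(n ·)^{2*}`.
There both terms are `n^{-N}` times a fixed integrable function: `U_n ≤ A_N n^{-(N-2)/2}` on the
annulus `1 ≤ |x| < 2` outside which it vanishes, and `n^N U(n x)^{2*} ≤ 2^N n^{-N} U(x)^{2*}`
because `2 (1 + n² |x|²) ≥ n² (1 + |x|²)` for `|x| ≥ 1`.
-/

open Metric Module

theorem integral_pow_finrank_smul_comp_smul {E F : Type*} [NormedAddCommGroup E]
    [NormedSpace ℝ E] [MeasurableSpace E] [BorelSpace E] [FiniteDimensional ℝ E]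
    (μ : Measure E) [μ.IsAddHaarMeasure] [NormedAddCommGroup F] [NormedSpace ℝ F]
    (f : E → F) {R : ℝ} (hR : 0 < R) :
    ∫ x, R ^ finrank ℝ E • f (R • x) ∂μ = ∫ x, f x ∂μ := by
  rw [integral_smul, Measure.integral_comp_smul_of_nonneg μ f R (hR := hR.le),
    smul_inv_smul₀ (pow_ne_zero _ hR.ne')]

namespace AubinTalenti

/-- The normalising constant `A_N`. -/
noncomputable def bubbleConst (N : ℕ) : ℝ := ((N : ℝ) * ((N : ℝ) - 2)) ^ (((N : ℝ) - 2) / 4)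

section

variable {N : ℕ}

lemma Ufull_eq (x : EuclideanSpace ℝ (Fin N)) :
    Ufull N x = bubbleConst N * (1 + ‖x‖ ^ 2) ^ (-(((N : ℝ) - 2) / 2)) := rfl

lemma bubbleProfile_of_lt_one (n : ℕ) {r : ℝ} (hr : r < 1) :
    bubbleProfile N n r
      = bubbleConst N * ((n : ℝ) / (1 + (n : ℝ) ^ 2 * r ^ 2)) ^ (((N : ℝ) - 2) / 2) :=
  if_pos hr

lemma bubbleProfile_of_one_le_of_lt_two (n : ℕ) {r : ℝ} (hr₁ : 1 ≤ r) (hr₂ : r < 2) :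
    bubbleProfile N n r
      = bubbleConst N * ((n : ℝ) / (1 + (n : ℝ) ^ 2)) ^ (((N : ℝ) - 2) / 2) * (2 - r) := by
  rw [bubbleProfile, if_neg hr₁.not_gt, if_pos hr₂]
  rfl

lemma bubbleProfile_of_two_le (n : ℕ) {r : ℝ} (hr : 2 ≤ r) : bubbleProfile N n r = 0 := by
  rw [bubbleProfile, if_neg (by linarith), if_neg hr.not_gt]

lemma bubbleConst_pos (hN : 3 ≤ N) : 0 < bubbleConst N := by
  have h2 : (2 : ℝ) < N := by exact_mod_cast hN
  exact Real.rpow_pos_of_pos (by nlinarith) _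

lemma twoStar_pos (hN : 3 ≤ N) : 0 < twoStar N := by
  have h2 : (2 : ℝ) < N := by exact_mod_cast hN
  exact div_pos (by linarith) (by linarith)

lemma rpow_sub_two_div_two_rpow_twoStar (hN : 3 ≤ N) {t : ℝ} (ht : 0 ≤ t) :
    (t ^ (((N : ℝ) - 2) / 2)) ^ twoStar N = t ^ N := by
  have h2 : (2 : ℝ) < N := by exact_mod_cast hN
  rw [← Real.rpow_mul ht, ← Real.rpow_natCast]
  congr 1
  rw [twoStar, div_mul_div_comm, div_eq_iff (by nlinarith)]
  ring

lemma Ufull_rpow_twoStar (hN : 3 ≤ N) (x : EuclideanSpace ℝ (Fin N)) :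
    Ufull N x ^ twoStar N = bubbleConst N ^ twoStar N / (1 + ‖x‖ ^ 2) ^ N := by
  have h1 : 0 ≤ 1 + ‖x‖ ^ 2 := by positivity
  rw [Ufull_eq, Real.rpow_neg h1, ← Real.inv_rpow h1,
    Real.mul_rpow (bubbleConst_pos hN).le (Real.rpow_nonneg (inv_nonneg.2 h1) _),
    rpow_sub_two_div_two_rpow_twoStar hN (inv_nonneg.2 h1), inv_pow, div_eq_mul_inv]

lemma Ufull_rpow_twoStar_nonneg (hN : 3 ≤ N) (x : EuclideanSpace ℝ (Fin N)) :
    0 ≤ Ufull N x ^ twoStar N := by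
  rw [Ufull_rpow_twoStar hN]
  exact div_nonneg (Real.rpow_nonneg (bubbleConst_pos hN).le _) (by positivity)

lemma integrable_Ufull_rpow_twoStar (hN : 3 ≤ N) :
    Integrable fun x : EuclideanSpace ℝ (Fin N) => Ufull N x ^ twoStar N := by
  have hdim : (finrank ℝ (EuclideanSpace ℝ (Fin N)) : ℝ) < 2 * N := by
    rw [finrank_euclideanSpace_fin]
    have : (3 : ℝ) ≤ N := by exact_mod_cast hN
    linarith
  convert (integrable_rpow_neg_one_add_norm_sq (μ := volume) hdim).const_mul
    (bubbleConst N ^ twoStar N) using 2 with x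
  rw [Ufull_rpow_twoStar hN, show -(2 * (N : ℝ)) / 2 = -(N : ℝ) by ring,
    Real.rpow_neg (by positivity), Real.rpow_natCast, div_eq_mul_inv]

lemma bubbleProfile_nonneg (hN : 3 ≤ N) (n : ℕ) (r : ℝ) : 0 ≤ bubbleProfile N n r := by
  have hc := (bubbleConst_pos hN).le
  unfold bubbleProfile
  split_ifs with h1 h2
  · exact mul_nonneg hc (Real.rpow_nonneg (by positivity) _)
  · exact mul_nonneg (mul_nonneg hc (Real.rpow_nonneg (by positivity) _)) (by linarith)
  · exact le_rfl

lemma measurable_bubbleProfile (N n : ℕ) : Measurable (bubbleProfile N n) := by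
  unfold bubbleProfile
  refine Measurable.ite (measurableSet_lt measurable_id measurable_const) (by fun_prop) ?_
  exact Measurable.ite (measurableSet_lt measurable_id measurable_const) (by fun_prop)
    measurable_const

lemma Ubub_rpow_twoStar_of_norm_lt_one (hN : 3 ≤ N) (n : ℕ) {x : EuclideanSpace ℝ (Fin N)}
    (hx : ‖x‖ < 1) :
    Ubub N n x ^ twoStar N = (n : ℝ) ^ N * Ufull N ((n : ℝ) • x) ^ twoStar N := by
  have hD : 0 < 1 + (n : ℝ) ^ 2 * ‖x‖ ^ 2 := by positivity
  have hc := (bubbleConst_pos hN).le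
  rw [Ufull_rpow_twoStar hN, norm_smul, Real.norm_natCast, mul_pow, Ubub,
    bubbleProfile_of_lt_one n hx, Real.mul_rpow hc (Real.rpow_nonneg (by positivity) _),
    rpow_sub_two_div_two_rpow_twoStar hN (by positivity), div_pow]
  field_simp

lemma Ubub_rpow_twoStar_le_of_one_le_norm (hN : 3 ≤ N) {n : ℕ} (hn : 0 < n)
    {x : EuclideanSpace ℝ (Fin N)} (hx : 1 ≤ ‖x‖) :
    Ubub N n x ^ twoStar N
      ≤ (closedBall 0 2).indicator (fun _ => bubbleConst N ^ twoStar N) x / (n : ℝ) ^ N := by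
  have hp := twoStar_pos hN
  have hc := (bubbleConst_pos hN).le
  by_cases hx₂ : ‖x‖ < 2
  · rw [Set.indicator_of_mem (mem_closedBall_zero_iff.2 hx₂.le)]
    have hn' : (0 : ℝ) < n := by exact_mod_cast hn
    have hq : (0 : ℝ) ≤ ((N : ℝ) - 2) / 2 := by
      have : (3 : ℝ) ≤ N := by exact_mod_cast hN
      linarith
    have hle : Ubub N n x ≤ bubbleConst N * ((n : ℝ)⁻¹) ^ (((N : ℝ) - 2) / 2) := by
      have hdecay : (n : ℝ) / (1 + (n : ℝ) ^ 2) ≤ (n : ℝ)⁻¹ := by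
        rw [div_le_iff₀ (by positivity), inv_mul_eq_div, le_div_iff₀ hn']
        nlinarith
      calc Ubub N n x
          = bubbleConst N * ((n : ℝ) / (1 + (n : ℝ) ^ 2)) ^ (((N : ℝ) - 2) / 2) * (2 - ‖x‖) :=
            bubbleProfile_of_one_le_of_lt_two n hx hx₂
        _ ≤ bubbleConst N * ((n : ℝ) / (1 + (n : ℝ) ^ 2)) ^ (((N : ℝ) - 2) / 2) * 1 := by
            gcongr
            linarith
        _ ≤ bubbleConst N * ((n : ℝ)⁻¹) ^ (((N : ℝ) - 2) / 2) := by
            rw [mul_one]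
            gcongr
    calc Ubub N n x ^ twoStar N
        ≤ (bubbleConst N * ((n : ℝ)⁻¹) ^ (((N : ℝ) - 2) / 2)) ^ twoStar N :=
          Real.rpow_le_rpow (bubbleProfile_nonneg hN n _) hle hp.le
      _ = bubbleConst N ^ twoStar N / (n : ℝ) ^ N := by
          rw [Real.mul_rpow hc (by positivity),
            rpow_sub_two_div_two_rpow_twoStar hN (by positivity), inv_pow, div_eq_mul_inv]
  · rw [Ubub, bubbleProfile_of_two_le n (not_lt.1 hx₂), Real.zero_rpow hp.ne']
    exact div_nonneg (Set.indicator_nonneg (fun _ _ => by positivity) _) (by positivity)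

lemma natCast_pow_mul_Ufull_smul_rpow_twoStar_le (hN : 3 ≤ N) {n : ℕ} (hn : 0 < n)
    {x : EuclideanSpace ℝ (Fin N)} (hx : 1 ≤ ‖x‖) :
    (n : ℝ) ^ N * Ufull N ((n : ℝ) • x) ^ twoStar N
      ≤ 2 ^ N * Ufull N x ^ twoStar N / (n : ℝ) ^ N := by
  have hn' : (0 : ℝ) < n := by exact_mod_cast hn
  have hc := Real.rpow_nonneg (bubbleConst_pos hN).le (twoStar N)
  have key : (n : ℝ) ^ 2 * (1 + ‖x‖ ^ 2) ≤ 2 * (1 + (n : ℝ) ^ 2 * ‖x‖ ^ 2) := by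
    nlinarith [mul_le_mul_of_nonneg_left (one_le_pow₀ (n := 2) hx) (sq_nonneg (n : ℝ))]
  rw [Ufull_rpow_twoStar hN, Ufull_rpow_twoStar hN, norm_smul, Real.norm_natCast, mul_pow,
    mul_div_assoc', mul_div_assoc', div_div, div_le_div_iff₀ (by positivity) (by positivity)]
  calc (n : ℝ) ^ N * bubbleConst N ^ twoStar N * ((1 + ‖x‖ ^ 2) ^ N * (n : ℝ) ^ N)
      = bubbleConst N ^ twoStar N * ((n : ℝ) ^ 2 * (1 + ‖x‖ ^ 2)) ^ N := by
        rw [mul_pow, ← pow_mul, mul_comm 2 N]; ring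
    _ ≤ bubbleConst N ^ twoStar N * (2 * (1 + (n : ℝ) ^ 2 * ‖x‖ ^ 2)) ^ N := by gcongr
    _ = 2 ^ N * bubbleConst N ^ twoStar N * (1 + (n : ℝ) ^ 2 * ‖x‖ ^ 2) ^ N := by
        rw [mul_pow]; ring

noncomputable def bubbleDefect (N n : ℕ) (x : EuclideanSpace ℝ (Fin N)) : ℝ :=
  Ubub N n x ^ twoStar N - (n : ℝ) ^ N * Ufull N ((n : ℝ) • x) ^ twoStar N

noncomputable def defectMajorant (N : ℕ) (x : EuclideanSpace ℝ (Fin N)) : ℝ :=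
  (closedBall 0 2).indicator (fun _ => bubbleConst N ^ twoStar N) x
    + 2 ^ N * Ufull N x ^ twoStar N

lemma defectMajorant_nonneg (hN : 3 ≤ N) (x : EuclideanSpace ℝ (Fin N)) :
    0 ≤ defectMajorant N x :=
  add_nonneg (Set.indicator_nonneg (fun _ _ => Real.rpow_nonneg (bubbleConst_pos hN).le _) _)
    (mul_nonneg (by positivity) (Ufull_rpow_twoStar_nonneg hN x))

lemma integrable_defectMajorant (hN : 3 ≤ N) :
    Integrable (defectMajorant N) :=
  ((integrable_indicator_iff measurableSet_closedBall).2
    (integrableOn_const measure_closedBall_lt_top.ne)).add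
    ((integrable_Ufull_rpow_twoStar hN).const_mul _)

lemma abs_bubbleDefect_le (hN : 3 ≤ N) {n : ℕ} (hn : 0 < n) (x : EuclideanSpace ℝ (Fin N)) :
    |bubbleDefect N n x| ≤ defectMajorant N x / (n : ℝ) ^ N := by
  rcases lt_or_ge ‖x‖ 1 with hx | hx
  · rw [bubbleDefect, Ubub_rpow_twoStar_of_norm_lt_one hN n hx, sub_self, abs_zero]
    exact div_nonneg (defectMajorant_nonneg hN x) (by positivity)
  · have h₁ := Ubub_rpow_twoStar_le_of_one_le_norm hN hn hx
    have h₂ := natCast_pow_mul_Ufull_smul_rpow_twoStar_le hN hn hx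
    have h₁' : 0 ≤ Ubub N n x ^ twoStar N :=
      Real.rpow_nonneg (bubbleProfile_nonneg hN n ‖x‖) (twoStar N)
    have h₂' := mul_nonneg (pow_nonneg (Nat.cast_nonneg n) N)
      (Ufull_rpow_twoStar_nonneg hN ((n : ℝ) • x))
    have h₁'' : 0 ≤ (closedBall 0 2).indicator (fun _ => bubbleConst N ^ twoStar N) x
        / (n : ℝ) ^ N := h₁'.trans h₁
    have h₂'' : 0 ≤ 2 ^ N * Ufull N x ^ twoStar N / (n : ℝ) ^ N := h₂'.trans h₂
    rw [defectMajorant, add_div, bubbleDefect, abs_le]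
    constructor <;> linarith

lemma integrable_bubbleDefect (hN : 3 ≤ N) {n : ℕ} (hn : 0 < n) :
    Integrable (bubbleDefect N n) := by
  refine ((integrable_defectMajorant hN).div_const _).mono' ?_
    (ae_of_all _ (abs_bubbleDefect_le hN hn))
  have := measurable_bubbleProfile N n
  unfold bubbleDefect Ubub Ufull
  fun_prop

lemma integral_Ubub_sub_integral_Ufull (hN : 3 ≤ N) {n : ℕ} (hn : 0 < n) :
    (∫ x, Ubub N n x ^ twoStar N) - ∫ x, Ufull N x ^ twoStar N
      = ∫ x, bubbleDefect N n x := by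
  have hn' : (0 : ℝ) < n := by exact_mod_cast hn
  have hrescaled : Integrable fun x : EuclideanSpace ℝ (Fin N) =>
      (n : ℝ) ^ N * Ufull N ((n : ℝ) • x) ^ twoStar N :=
    ((integrable_Ufull_rpow_twoStar hN).comp_smul hn'.ne').const_mul _
  have hscaling : ∫ x : EuclideanSpace ℝ (Fin N), (n : ℝ) ^ N * Ufull N ((n : ℝ) • x) ^ twoStar N
      = ∫ x, Ufull N x ^ twoStar N := by
    simpa only [finrank_euclideanSpace_fin, smul_eq_mul] using
      integral_pow_finrank_smul_comp_smul volume (fun x => Ufull N x ^ twoStar N) hn'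
  have hsplit : (fun x => Ubub N n x ^ twoStar N)
      = fun x => bubbleDefect N n x + (n : ℝ) ^ N * Ufull N ((n : ℝ) • x) ^ twoStar N := by
    funext x
    rw [bubbleDefect, sub_add_cancel]
  rw [hsplit, integral_add (integrable_bubbleDefect hN hn) hrescaled, hscaling,
    add_sub_cancel_right]

end

end AubinTalenti

open AubinTalenti in
theorem stmt_9 (N : ℕ) (hN : N = 3 ∨ N = 4) :
    ∃ C : ℝ, 0 < C ∧ ∀ n : ℕ, 1 ≤ n →
      |(∫ x : EuclideanSpace ℝ (Fin N), (Ubub N n x) ^ (twoStar N))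
          - ∫ x : EuclideanSpace ℝ (Fin N), (Ufull N x) ^ (twoStar N)|
        ≤ C * (n : ℝ) ^ (-(N : ℝ)) := by
  have hN3 : 3 ≤ N := by omega
  have hM : 0 ≤ ∫ x, defectMajorant N x := integral_nonneg (defectMajorant_nonneg hN3)
  refine ⟨(∫ x, defectMajorant N x) + 1, by linarith, fun n hn => ?_⟩
  have hn' : (0 : ℝ) < n := by exact_mod_cast hn
  rw [integral_Ubub_sub_integral_Ufull hN3 hn, Real.rpow_neg hn'.le, Real.rpow_natCast,
    ← div_eq_mul_inv, ← Real.norm_eq_abs]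
  calc ‖∫ x, bubbleDefect N n x‖
      ≤ ∫ x, defectMajorant N x / (n : ℝ) ^ N :=
        norm_integral_le_of_norm_le ((integrable_defectMajorant hN3).div_const _)
          (ae_of_all _ (abs_bubbleDefect_le hN3 hn))
    _ = (∫ x, defectMajorant N x) / (n : ℝ) ^ N := integral_div _ _
    _ ≤ ((∫ x, defectMajorant N x) + 1) / (n : ℝ) ^ N := by gcongr; linarith
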